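/- Every permutation snark has a proper (Z_4 × Z_2)-coloring. -/

import Mathlib

open SimpleGraph

variable {V : Type*}

/-- A cubic graph: every vertex has exactly `3` neighbours. -/
def IsCubic (G : SimpleGraph V) : Prop :=
  ∀ v : V, (G.neighborSet v).ncard = 3

/-- Two edges (as elements of `Sym2 V`) are adjacent if they are distinct and
share an endpoint. -/
def EdgesAdj (e₁ e₂ : Sym2 V) : Prop :=
  e₁ ≠ e₂ ∧ ∃ v : V, v ∈ e₁ ∧ v ∈ e₂

/-- `G` has a proper `3`-edge-coloring. -/
def HasProper3EdgeColoring (G : SimpleGraph V) : Prop :=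
  ∃ c : Sym2 V → Fin 3,
    ∀ e₁ ∈ G.edgeSet, ∀ e₂ ∈ G.edgeSet, EdgesAdj e₁ e₂ → c e₁ ≠ c e₂

/-- A bridgeless graph: no edge is a bridge. -/
def IsBridgeless (G : SimpleGraph V) : Prop :=
  ∀ e ∈ G.edgeSet, ¬ G.IsBridge e

/-- A snark: a connected bridgeless cubic graph admitting no proper
`3`-edge-coloring. -/
def IsSnark (G : SimpleGraph V) : Prop :=
  G.Connected ∧ IsBridgeless G ∧ IsCubic G ∧ ¬ HasProper3EdgeColoring G

/-- A proper abelian coloring of `G` by the abelian group `A`: every edge gets a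
nonzero color, adjacent edges get distinct colors, and at every vertex the
colors of the incident edges sum to zero. -/
def IsProperAbelianColoring {A : Type*} [AddCommGroup A]
    (G : SimpleGraph V) (σ : Sym2 V → A) : Prop :=
  (∀ e ∈ G.edgeSet, σ e ≠ 0) ∧
  (∀ e₁ ∈ G.edgeSet, ∀ e₂ ∈ G.edgeSet, EdgesAdj e₁ e₂ → σ e₁ ≠ σ e₂) ∧
  (∀ v : V, ∑ᶠ e ∈ G.incidenceSet v, σ e = 0)

/-- `F` is a `2`-factor of `G`: a spanning `2`-regular subgraph. -/
def IsTwoFactor (G F : SimpleGraph V) : Prop :=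
  F ≤ G ∧ ∀ v : V, (F.neighborSet v).ncard = 2

/-- `M` is a matching contained in the edge set of `F`. -/
def IsMatchingIn (M : Set (Sym2 V)) (F : SimpleGraph V) : Prop :=
  M ⊆ F.edgeSet ∧ ∀ e₁ ∈ M, ∀ e₂ ∈ M, e₁ ≠ e₂ → ¬ ∃ v : V, v ∈ e₁ ∧ v ∈ e₂

/-- A perfect matching in `F`: a matching covering every vertex. -/
def IsPerfectMatchingIn (M : Set (Sym2 V)) (F : SimpleGraph V) : Prop :=
  IsMatchingIn M F ∧ ∀ v : V, ∃ e ∈ M, v ∈ e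

/-- A maximum matching in `F`: a matching of maximum cardinality. -/
def IsMaximumMatchingIn (M : Set (Sym2 V)) (F : SimpleGraph V) : Prop :=
  IsMatchingIn M F ∧ ∀ M' : Set (Sym2 V), IsMatchingIn M' F → M'.ncard ≤ M.ncard

/-- A `3`-vertex of `H`: a vertex of degree `3`. -/
def IsThreeVertex (H : SimpleGraph V) (v : V) : Prop := (H.neighborSet v).ncard = 3

/-- A `2`-vertex of `H`: a vertex of degree `2`. -/
def IsTwoVertex (H : SimpleGraph V) (v : V) : Prop := (H.neighborSet v).ncard = 2

/-- An `F`-path in `H`: a (nontrivial) path in `H` whose two end-vertices are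
`3`-vertices of `H`, whose interior vertices are all `2`-vertices of `H`, and
whose two end-edges belong to `F`. -/
structure FPathIn (H F : SimpleGraph V) where
  a : V
  b : V
  walk : H.Walk a b
  isPath : walk.IsPath
  len_pos : 0 < walk.length
  ends_three : IsThreeVertex H a ∧ IsThreeVertex H b
  interior_two : ∀ w ∈ walk.support, w ≠ a → w ≠ b → IsTwoVertex H w
  end_edges : ∀ e ∈ walk.edges, (a ∈ e ∨ b ∈ e) → e ∈ F.edgeSet

/-- The vertices of an `F`-path. -/
def FPathIn.supp {H F : SimpleGraph V} (P : FPathIn H F) : Set V :=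
  {v | v ∈ P.walk.support}

/-- The edges of an `F`-path. -/
def FPathIn.edgeSet {H F : SimpleGraph V} (P : FPathIn H F) : Set (Sym2 V) :=
  {e | e ∈ P.walk.edges}

/-- An `F`-matching of `H`: a collection of pairwise vertex-disjoint `F`-paths
such that every `3`-vertex of `H` lies on (exactly) one of them. -/
def IsFMatching (H F : SimpleGraph V) (Ps : Set (FPathIn H F)) : Prop :=
  (∀ P ∈ Ps, ∀ Q ∈ Ps, P ≠ Q → Disjoint P.supp Q.supp) ∧
  (∀ v : V, IsThreeVertex H v → ∃ P ∈ Ps, v ∈ P.supp)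

/-- The set of edges lying on the paths of an `F`-matching. -/
def FMatchingEdges {H F : SimpleGraph V} (Ps : Set (FPathIn H F)) : Set (Sym2 V) :=
  {e | ∃ P ∈ Ps, e ∈ P.walk.edges}

/-- The `F`-complement of an `F`-matching: the subgraph of `H` induced by the
edges of `H` not lying on the paths of `Ps`. -/
def FComplement {H F : SimpleGraph V} (Ps : Set (FPathIn H F)) : SimpleGraph V :=
  H.deleteEdges (FMatchingEdges Ps)

/-- The number of `3`-vertices of `H` lying on a connected component `c` of `K`. -/
noncomputable def threeCount (H : SimpleGraph V) {K : SimpleGraph V} (c : K.ConnectedComponent) : ℕ :=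
  {v ∈ c.supp | IsThreeVertex H v}.ncard

/-- The graph `K` (an `F`-complement, whose nontrivial components are the
loops) is `3`-even w.r.t. `H`: every component carries an even number of
`3`-vertices of `H`. -/
def IsThreeEvenComplement (H K : SimpleGraph V) : Prop :=
  ∀ c : K.ConnectedComponent, Even (threeCount H c)

/-- A component of `K` is a `3`-odd loop if it carries an odd number of
`3`-vertices of `H`. -/
def Is3OddLoop (H : SimpleGraph V) {K : SimpleGraph V} (c : K.ConnectedComponent) : Prop :=
  Odd (threeCount H c)

/-- The number of odd components (odd cycles, for a `2`-factor) of `F`. -/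
noncomputable def oddCompCount (F : SimpleGraph V) : ℕ :=
  {c : F.ConnectedComponent | Odd c.supp.ncard}.ncard

/-- The number of even components (even cycles, for a `2`-factor) of `F`. -/
noncomputable def evenCompCount (F : SimpleGraph V) : ℕ :=
  {c : F.ConnectedComponent | Even c.supp.ncard}.ncard

/-- The oddness of `G`: the minimum number of odd cycles in a `2`-factor of `G`. -/
noncomputable def oddness (G : SimpleGraph V) : ℕ :=
  sInf {n : ℕ | ∃ F : SimpleGraph V, IsTwoFactor G F ∧ oddCompCount F = n}

/-- `v` lies on an odd component (odd cycle) of `F`. -/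
def OnOddCycle (F : SimpleGraph V) (v : V) : Prop :=
  Odd ((F.connectedComponentMk v).supp.ncard)

/-- A simple `F`-matching: an `F`-matching such that on each of its paths the
only edges lying on odd cycles of `F` are the edges incident to the
end-vertices. -/
def IsSimpleFMatching (H F : SimpleGraph V) (Ps : Set (FPathIn H F)) : Prop :=
  IsFMatching H F Ps ∧
  ∀ P ∈ Ps, ∀ e ∈ P.walk.edges,
    (e ∈ F.edgeSet ∧ ∀ w ∈ e, OnOddCycle F w) → (P.a ∈ e ∨ P.b ∈ e)

/-- The set `C ⊆ V` carries a `Θ`-graph structure in `H`: two distinct vertices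
joined by three internally disjoint paths whose union is exactly the part of
`H` on `C`. -/
def IsThetaOn (H : SimpleGraph V) (C : Set V) : Prop :=
  ∃ a b : V, a ≠ b ∧ ∃ p q r : H.Walk a b,
    p.IsPath ∧ q.IsPath ∧ r.IsPath ∧ p ≠ q ∧ p ≠ r ∧ q ≠ r ∧
    (∀ w ∈ p.support, w ∈ q.support → w = a ∨ w = b) ∧
    (∀ w ∈ p.support, w ∈ r.support → w = a ∨ w = b) ∧
    (∀ w ∈ q.support, w ∈ r.support → w = a ∨ w = b) ∧
    C = {w | w ∈ p.support ∨ w ∈ q.support ∨ w ∈ r.support} ∧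
    (∀ e ∈ H.edgeSet, (∀ w ∈ e, w ∈ C) → e ∈ p.edges ∨ e ∈ q.edges ∨ e ∈ r.edges)

/-- The set `C ⊆ V` carries a kayak-paddle graph structure in `H`: two
vertex-disjoint cycles joined by a path, their union being exactly the part of
`H` on `C`. -/
def IsKayakPaddleOn (H : SimpleGraph V) (C : Set V) : Prop :=
  ∃ a b : V, ∃ (c₁ : H.Walk a a) (c₂ : H.Walk b b) (p : H.Walk a b),
    c₁.IsCycle ∧ c₂.IsCycle ∧ p.IsPath ∧
    (∀ w ∈ c₁.support, w ∉ c₂.support) ∧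
    (∀ w ∈ p.support, w ∈ c₁.support → w = a) ∧
    (∀ w ∈ p.support, w ∈ c₂.support → w = b) ∧
    C = {w | w ∈ c₁.support ∨ w ∈ c₂.support ∨ w ∈ p.support} ∧
    (∀ e ∈ H.edgeSet, (∀ w ∈ e, w ∈ C) → e ∈ c₁.edges ∨ e ∈ c₂.edges ∨ e ∈ p.edges)

/-- The set `C ⊆ V` carries an even cycle of `H` whose vertices and edges are
exactly the part of `H` on `C`. -/
def IsEvenCycleOn (H : SimpleGraph V) (C : Set V) : Prop :=
  ∃ a : V, ∃ W : H.Walk a a, W.IsCycle ∧ Even W.length ∧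
    C = {w | w ∈ W.support} ∧
    (∀ e ∈ H.edgeSet, (∀ w ∈ e, w ∈ C) → e ∈ W.edges)

/-- `Meven` is a perfect matching of the even part `F_even` of the `2`-factor
`F`: a matching of `F` using only edges on even cycles and covering all
vertices of even cycles. -/
def IsPerfectMatchingOfEvenPart (Meven : Set (Sym2 V)) (F : SimpleGraph V) : Prop :=
  IsMatchingIn Meven F ∧
  (∀ e ∈ Meven, ∀ w ∈ e, ¬ OnOddCycle F w) ∧
  (∀ v : V, ¬ OnOddCycle F v → ∃ e ∈ Meven, v ∈ e)

/-- Two odd components `c₁`, `c₂` of `F` are linked in `H_odd = G − M_even`: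
there is a path of `H_odd` from `c₁` to `c₂` all of whose interior vertices
avoid odd cycles of `F` (i.e. are `2`-vertices of `H_odd`). -/
def OddCompLinked (G F : SimpleGraph V) (Meven : Set (Sym2 V))
    (c₁ c₂ : F.ConnectedComponent) : Prop :=
  ∃ u v : V, u ∈ c₁.supp ∧ v ∈ c₂.supp ∧
    ∃ W : (G.deleteEdges Meven).Walk u v, W.IsPath ∧ 0 < W.length ∧
      ∀ w ∈ W.support, w ≠ u → w ≠ v → ¬ OnOddCycle F w

/-- The odd-cycle-incidence graph `K_odd`: vertices are the odd cycles of `F`,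
two of them being adjacent iff they are linked by a path of
`H_odd = G − M_even` with all interior vertices `2`-vertices of `H_odd`
(this is `H_odd` with the edges of `F_odd` contracted and the `2`-vertices
suppressed). -/
def Kodd (G F : SimpleGraph V) (Meven : Set (Sym2 V)) :
    SimpleGraph {c : F.ConnectedComponent // Odd c.supp.ncard} where
  Adj c₁ c₂ := c₁ ≠ c₂ ∧
    (OddCompLinked G F Meven c₁.1 c₂.1 ∨ OddCompLinked G F Meven c₂.1 c₁.1)
  symm := ⟨fun c₁ c₂ h => ⟨h.1.symm, h.2.symm⟩⟩
  loopless := ⟨fun c h => h.1 rfl⟩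

/-- The set of edges of `K` lying on the connected component `c` of `K`. -/
def compEdgeSet (K : SimpleGraph V) (c : K.ConnectedComponent) : Set (Sym2 V) :=
  {e ∈ K.edgeSet | ∃ w, w ∈ e ∧ w ∈ c.supp}

/-- The set `E_Ps` of end-edges of the paths of an `F`-matching `Ps`. -/
def endEdges {H F : SimpleGraph V} (Ps : Set (FPathIn H F)) : Set (Sym2 V) :=
  {e | ∃ P ∈ Ps, e ∈ P.walk.edges ∧ (P.a ∈ e ∨ P.b ∈ e)}

/-- The edge set attached to a vertex of the loop-cycle-incidence graph `B`:
a component of `F − E_Ps`, a loop of the `F`-complement `ℒ`, or a path of `Ps`. -/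
def bEdgeSet (F : SimpleGraph V) {H : SimpleGraph V} (Ps : Set (FPathIn H F)) :
    (F.deleteEdges (endEdges Ps)).ConnectedComponent ⊕
      ((FComplement Ps).ConnectedComponent ⊕ ↥Ps) → Set (Sym2 V)
  | Sum.inl C => compEdgeSet (F.deleteEdges (endEdges Ps)) C
  | Sum.inr (Sum.inl c) => compEdgeSet (FComplement Ps) c
  | Sum.inr (Sum.inr P) => FPathIn.edgeSet P.1

/-- The loop-cycle-incidence graph `B`: a bipartite graph on
`𝒞* ⊕ (ℒ ⊕ Ps)`, where `𝒞*` is the set of components of `F − E_Ps`, `ℒ` the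
set of components (loops) of the `F`-complement and `Ps` the paths of the
`F`-matching; a component of `F − E_Ps` is adjacent to a loop/path iff they
share an edge of `G`. -/
def LoopCycleIncidence (F : SimpleGraph V) {H : SimpleGraph V}
    (Ps : Set (FPathIn H F)) :
    SimpleGraph ((F.deleteEdges (endEdges Ps)).ConnectedComponent ⊕
      ((FComplement Ps).ConnectedComponent ⊕ ↥Ps)) where
  Adj a b := ((a.isLeft ∧ b.isRight) ∨ (a.isRight ∧ b.isLeft)) ∧
    ∃ e, e ∈ bEdgeSet F Ps a ∧ e ∈ bEdgeSet F Ps b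
  symm := by
    constructor
    rintro a b ⟨hs, e, h₁, h₂⟩
    exact ⟨by tauto, e, h₂, h₁⟩
  loopless := by
    constructor
    rintro a ⟨hs, -⟩
    rcases a with a | a <;> simp_all

/-- Remove a set of vertices from a graph (keeping them as isolated vertices):
used to form `B − Ps`. -/
def removeVerts {W : Type*} (B : SimpleGraph W) (S : Set W) : SimpleGraph W where
  Adj a b := B.Adj a b ∧ a ∉ S ∧ b ∉ S
  symm := ⟨fun a b h => ⟨h.1.symm, h.2.2, h.2.1⟩⟩
  loopless := ⟨fun a h => B.loopless.1 a h.1⟩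

/-- The vertices of `B` corresponding to the paths of `Ps`. -/
def PVerts (F : SimpleGraph V) {H : SimpleGraph V} (Ps : Set (FPathIn H F)) :
    Set ((F.deleteEdges (endEdges Ps)).ConnectedComponent ⊕
      ((FComplement Ps).ConnectedComponent ⊕ ↥Ps)) :=
  {x | ∃ P : ↥Ps, x = Sum.inr (Sum.inr P)}

/-- A permutation snark: a snark having a `2`-factor consisting of precisely
two chordless cycles. -/
def IsPermutationSnark (G : SimpleGraph V) : Prop :=
  IsSnark G ∧ ∃ F : SimpleGraph V, IsTwoFactor G F ∧
    Nat.card F.ConnectedComponent = 2 ∧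
    ∀ u v : V, G.Adj u v → ¬ F.Adj u v →
      F.connectedComponentMk u ≠ F.connectedComponentMk v

/-- The graph obtained from `H` (all of whose vertices have degree `2` or `3`)
by suppressing the degree-`2` vertices is `3`-edge-colorable: there is a
`3`-coloring of the edges which is constant through `2`-vertices and proper at
`3`-vertices. -/
def SuppressedThreeEdgeColorable (H : SimpleGraph V) : Prop :=
  ∃ c : Sym2 V → Fin 3,
    (∀ v : V, IsThreeVertex H v →
      ∀ e₁ ∈ H.incidenceSet v, ∀ e₂ ∈ H.incidenceSet v, e₁ ≠ e₂ → c e₁ ≠ c e₂) ∧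
    (∀ v : V, IsTwoVertex H v →
      ∀ e₁ ∈ H.incidenceSet v, ∀ e₂ ∈ H.incidenceSet v, c e₁ = c e₂)

/-- `e_r(G)`: the minimum cardinality of a set of pairwise non-adjacent edges
of `G` whose removal, followed by suppression of the resulting `2`-vertices,
yields a `3`-edge-colorable (cubic) graph. -/
noncomputable def edgeReductionNumber (G : SimpleGraph V) : ℕ :=
  sInf {n : ℕ | ∃ R : Set (Sym2 V), IsMatchingIn R G ∧
    SuppressedThreeEdgeColorable (G.deleteEdges R) ∧ R.ncard = n}

/-!
Let `F` be the `2`-factor formed by the two chordless cycles. The remaining edges form a perfect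
matching `v ↦ τ v` joining the two cycles. Colour an edge `e` of `F` by `(x e, 1)` and a matching
edge `e` by `(m e, 0)`: the `ZMod 2` coordinate separates the two kinds of edges and sums to zero
at every vertex. What is left is a nowhere-zero `m` together with a `ZMod 4`-colouring `x` of each
cycle whose two colours at `v` are distinct and sum to `-m s(v, τ v)`. If the cycles are even,
`m = 1` and colours alternating `0, 3` around each cycle work. If they are odd, give one matching
edge colour `2`, another one colour `3` and all others `1`. On each cycle the alternating pattern
`0, 3`, with `2` added along the arc between the two special vertices, then meets these demands.
-/

section

variable {A : Type*} [AddCommGroup A] {G F : SimpleGraph V}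

/-- `d` stands for the colour of the third edge at `v`, the one outside `F`. -/
def IsProperFlowAt (F : SimpleGraph V) (x : Sym2 V → A) (d : A) (v : V) : Prop :=
  ∀ ⦃a c : V⦄, F.Adj v a → F.Adj v c → a ≠ c →
    x s(v, a) ≠ x s(v, c) ∧ x s(v, a) + x s(v, c) + d = 0

lemma SimpleGraph.neighborSet_eq_pair {v a c : V} (h : (F.neighborSet v).ncard = 2) (hac : a ≠ c)
    (ha : F.Adj v a) (hc : F.Adj v c) : F.neighborSet v = {a, c} :=
  (Set.eq_of_subset_of_ncard_le (by rintro _ (rfl | rfl) <;> assumption)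
    (by rw [h, Set.ncard_pair hac]) (Set.finite_of_ncard_pos (by omega))).symm

lemma isProperFlowAt_of_neighborSet_eq {x : Sym2 V → A} {d : A} {v a c : V}
    (hv : F.neighborSet v = {a, c}) (hne : x s(v, a) ≠ x s(v, c))
    (hsum : x s(v, a) + x s(v, c) + d = 0) : IsProperFlowAt F x d v := by
  intro a' c' ha' hc' hac'
  rw [← mem_neighborSet, hv] at ha' hc'
  rcases ha' with rfl | rfl <;> rcases hc' with rfl | rfl
  · exact absurd rfl hac'
  · exact ⟨hne, hsum⟩
  · exact ⟨hne.symm, by rwa [add_comm (x _)]⟩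
  · exact absurd rfl hac'

lemma SimpleGraph.incidenceSet_eq_image (v : V) :
    G.incidenceSet v = (fun u => s(v, u)) '' G.neighborSet v := by
  ext e
  refine ⟨fun ⟨he, hv⟩ => ?_, ?_⟩
  · obtain ⟨u, rfl⟩ := Sym2.mem_iff_exists.mp hv
    exact ⟨u, he, rfl⟩
  · rintro ⟨u, hu, rfl⟩
    exact ⟨hu, Sym2.mem_mk_left _ _⟩

section TwoFactor

variable (hG : IsCubic G) (hF : IsTwoFactor G F)
include hG hF

lemma IsTwoFactor.neighborSet_eq_insert {v w : V} (hw : G.Adj v w) (hw' : ¬F.Adj v w) :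
    G.neighborSet v = insert w (F.neighborSet v) := by
  refine (Set.eq_of_subset_of_ncard_le ?_ ?_ (Set.finite_of_ncard_pos (by rw [hG v]; omega))).symm
  · rintro u (rfl | hu)
    exacts [hw, hF.1 hu]
  · have hfin : (F.neighborSet v).Finite := Set.finite_of_ncard_pos (by rw [hF.2 v]; omega)
    rw [hG v, Set.ncard_insert_of_notMem (show w ∉ F.neighborSet v from hw') hfin, hF.2 v]

lemma IsTwoFactor.exists_adj_not_adj (v : V) : ∃ w, G.Adj v w ∧ ¬F.Adj v w := by
  by_contra! h
  have := Set.ncard_le_ncard (show G.neighborSet v ⊆ F.neighborSet v from fun w hw => h w hw)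
    (Set.finite_of_ncard_pos (by rw [hF.2 v]; omega))
  rw [hG v, hF.2 v] at this
  omega

lemma IsTwoFactor.eq_of_adj_not_adj {v u w : V} (hu : G.Adj v u) (hu' : ¬F.Adj v u)
    (hw : G.Adj v w) (hw' : ¬F.Adj v w) : u = w := by
  have : u ∈ G.neighborSet v := hu
  rw [hF.neighborSet_eq_insert hG hw hw'] at this
  exact this.resolve_right hu'

lemma IsTwoFactor.involutive_of_adj_not_adj {τ : V → V} (hτG : ∀ v, G.Adj v (τ v))
    (hτF : ∀ v, ¬F.Adj v (τ v)) : Function.Involutive τ := fun v =>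
  (hF.eq_of_adj_not_adj hG (hτG v).symm (fun h => hτF v h.symm) (hτG (τ v)) (hτF (τ v))).symm

end TwoFactor

open scoped Classical in
theorem IsTwoFactor.isProperAbelianColoring (hG : IsCubic G) (hF : IsTwoFactor G F)
    {τ : V → V} (hτG : ∀ v, G.Adj v (τ v)) (hτF : ∀ v, ¬F.Adj v (τ v)) {m x : Sym2 V → A}
    (hm : ∀ v, m s(v, τ v) ≠ 0) (hx : ∀ v, IsProperFlowAt F x (m s(v, τ v)) v) :
    IsProperAbelianColoring G
      (fun e => if e ∈ F.edgeSet then (x e, (1 : ZMod 2)) else (m e, 0)) := by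
  set σ : Sym2 V → A × ZMod 2 := fun e => if e ∈ F.edgeSet then (x e, 1) else (m e, 0)
  have hσF {v u : V} (h : F.Adj v u) : σ s(v, u) = (x s(v, u), 1) :=
    if_pos (show s(v, u) ∈ F.edgeSet from h)
  have hσM {v u : V} (h : ¬F.Adj v u) : σ s(v, u) = (m s(v, u), 0) :=
    if_neg (show s(v, u) ∉ F.edgeSet from h)
  have hτ {v u : V} (hu : G.Adj v u) (hu' : ¬F.Adj v u) : u = τ v :=
    hF.eq_of_adj_not_adj hG hu hu' (hτG v) (hτF v)
  refine ⟨fun e he => ?_, fun e₁ he₁ e₂ he₂ ⟨hne, v, hv₁, hv₂⟩ => ?_, fun v => ?_⟩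
  · induction e using Sym2.ind with | _ v u => ?_
    by_cases h : F.Adj v u
    · rw [hσF h]
      exact fun h0 => one_ne_zero (congrArg Prod.snd h0)
    · have hu : u = τ v := hτ he h
      rw [hσM h, hu]
      exact fun h0 => hm v (congrArg Prod.fst h0)
  · obtain ⟨u₁, rfl⟩ := Sym2.mem_iff_exists.mp hv₁
    obtain ⟨u₂, rfl⟩ := Sym2.mem_iff_exists.mp hv₂
    have hu : u₁ ≠ u₂ := fun h => hne (h ▸ rfl)
    by_cases h₁ : F.Adj v u₁ <;> by_cases h₂ : F.Adj v u₂
    · rw [hσF h₁, hσF h₂]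
      exact fun h => (hx v h₁ h₂ hu).1 (congrArg Prod.fst h)
    · rw [hσF h₁, hσM h₂]
      exact fun h => one_ne_zero (congrArg Prod.snd h)
    · rw [hσM h₁, hσF h₂]
      exact fun h => zero_ne_one (congrArg Prod.snd h)
    · exact absurd ((hτ he₁ h₁).trans (hτ he₂ h₂).symm) hu
  · obtain ⟨a, c, hac, hv⟩ := Set.ncard_eq_two.mp (hF.2 v)
    have ha : F.Adj v a := by rw [← mem_neighborSet, hv]; exact Set.mem_insert _ _
    have hc : F.Adj v c := by rw [← mem_neighborSet, hv]; exact Set.mem_insert_of_mem _ rfl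
    have hτa : τ v ≠ a := fun h => hτF v (h ▸ ha)
    have hτc : τ v ≠ c := fun h => hτF v (h ▸ hc)
    rw [incidenceSet_eq_image, hF.neighborSet_eq_insert hG (hτG v) (hτF v), hv,
      finsum_mem_image (Set.injOn_of_injective fun _ _ => Sym2.congr_right.mp),
      finsum_mem_insert _ (by simp [hτa, hτc]) (Set.toFinite _), finsum_mem_pair hac,
      hσM (hτF v), hσF ha, hσF hc]
    ext
    · simpa [add_comm, add_left_comm] using (hx v ha hc hac).2
    · simp only [Prod.snd_add, Prod.snd_zero]
      decide

lemma exists_forall_isProperFlowAt {d : V → A}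
    (h : ∀ C : F.ConnectedComponent, ∃ x : Sym2 V → A, ∀ v ∈ C.supp, IsProperFlowAt F x (d v) v) :
    ∃ x : Sym2 V → A, ∀ v, IsProperFlowAt F x (d v) v := by
  choose X hX using h
  refine ⟨fun e => X (F.connectedComponentMk e.out.1) e, fun v a c ha hc hac => ?_⟩
  have hcomp {u : V} (hu : F.Adj v u) :
      F.connectedComponentMk s(v, u).out.1 = F.connectedComponentMk v := by
    rcases Sym2.mem_iff.mp (Sym2.out_fst_mem s(v, u)) with h | h <;> rw [h]
    exact ConnectedComponent.connectedComponentMk_eq_of_adj hu.symm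
  simp only [hcomp ha, hcomp hc]
  exact hX _ v rfl ha hc hac

namespace SimpleGraph.Walk.IsCycle

variable {b : V} {p : F.Walk b b}

lemma neighborSet_getVert (hp : p.IsCycle) (hF : ∀ v, (F.neighborSet v).ncard = 2) {i : ℕ}
    (hi₀ : 0 < i) (hi : i < p.length) :
    F.neighborSet (p.getVert i) = {p.getVert (i - 1), p.getVert (i + 1)} := by
  refine neighborSet_eq_pair (hF _) (hp.getVert_sub_one_ne_getVert_add_one hi.le) ?_
    (p.adj_getVert_succ hi)
  simpa [Nat.sub_add_cancel hi₀] using (p.adj_getVert_succ (i := i - 1) (by omega)).symm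

lemma neighborSet_start (hp : p.IsCycle) (hF : ∀ v, (F.neighborSet v).ncard = 2) :
    F.neighborSet b = {p.getVert (p.length - 1), p.getVert 1} := by
  have hlen := hp.three_le_length
  refine neighborSet_eq_pair (hF _) hp.snd_ne_penultimate.symm ?_ ?_
  · simpa [Nat.sub_add_cancel (by omega : 1 ≤ p.length)] using
      (p.adj_getVert_succ (i := p.length - 1) (by omega)).symm
  · simpa using p.adj_getVert_succ (i := 0) (by omega)

lemma exists_isProperFlowAt (hp : p.IsCycle) (hF : ∀ v, (F.neighborSet v).ncard = 2)
    (d : V → A) (y : ℕ → A) (hy₀ : y (p.length - 1) ≠ y 0 ∧ y (p.length - 1) + y 0 + d b = 0)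
    (hy : ∀ i, 0 < i → i < p.length →
      y (i - 1) ≠ y i ∧ y (i - 1) + y i + d (p.getVert i) = 0) :
    ∃ x : Sym2 V → A, ∀ v ∈ p.support, IsProperFlowAt F x (d v) v := by
  classical
  have hlen := hp.three_le_length
  have hx {i : ℕ} (hi : i < p.length) :
      y (p.edges.idxOf s(p.getVert i, p.getVert (i + 1))) = y i := by
    rw [← p.getElem_edges (by simpa), hp.edges_nodup.idxOf_getElem]
  refine ⟨fun e => y (p.edges.idxOf e), fun v hv => ?_⟩
  have hstart : IsProperFlowAt F (fun e => y (p.edges.idxOf e)) (d b) b := by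
    have h₁ := hx (i := p.length - 1) (by omega)
    have h₂ := hx (i := 0) (by omega)
    rw [Nat.sub_add_cancel (by omega), getVert_length, Sym2.eq_swap] at h₁
    rw [getVert_zero, zero_add] at h₂
    refine isProperFlowAt_of_neighborSet_eq (hp.neighborSet_start hF) ?_ ?_ <;>
      simp only [h₁, h₂]
    exacts [hy₀.1, hy₀.2]
  obtain ⟨i, rfl, hi⟩ := mem_support_iff_exists_getVert.mp hv
  rcases (show i = 0 ∨ i = p.length ∨ (0 < i ∧ i < p.length) by omega) with rfl | rfl | ⟨hi₀, hi⟩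
  · simpa using hstart
  · simpa using hstart
  · have h₁ := hx (i := i - 1) (by omega)
    rw [Nat.sub_add_cancel hi₀, Sym2.eq_swap] at h₁
    refine isProperFlowAt_of_neighborSet_eq (hp.neighborSet_getVert hF hi₀ hi) ?_ ?_ <;>
      simp only [h₁, hx hi]
    exacts [(hy i hi₀ hi).1, (hy i hi₀ hi).2]

end SimpleGraph.Walk.IsCycle

lemma SimpleGraph.Walk.IsCycle.ncard_support {b : V} {p : F.Walk b b} (hp : p.IsCycle) :
    {v | v ∈ p.support}.ncard = p.length := by
  classical
  have htail : {v | v ∈ p.support} = ↑p.support.tail.toFinset := by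
    ext v
    simp only [Set.mem_ofPred_eq, List.coe_toFinset]
    refine ⟨fun hv => ?_, List.mem_of_mem_tail⟩
    rw [← p.cons_tail_support] at hv
    rcases List.mem_cons.mp hv with rfl | h
    exacts [end_mem_tail_support hp.not_nil, h]
  rw [htail, Set.ncard_coe_finset, List.toFinset_card_of_nodup hp.support_nodup,
    List.length_tail, length_support, Nat.add_sub_cancel]

lemma SimpleGraph.ConnectedComponent.exists_isCycle_support [Finite V]
    (hF : ∀ v, (F.neighborSet v).ncard = 2) {C : F.ConnectedComponent} {b : V} (hb : b ∈ C.supp) :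
    ∃ p : F.Walk b b, p.IsCycle ∧ {v | v ∈ p.support} = C.supp ∧ p.length = C.supp.ncard := by
  obtain ⟨p, hp, hverts⟩ := IsCycles.exists_cycle_toSubgraph_verts_eq_connectedComponentSupp
    (fun v _ => hF v) hb (Set.nonempty_of_ncard_ne_zero (by rw [hF b]; omega))
  rw [Walk.verts_toSubgraph] at hverts
  exact ⟨p, hp, hverts, by rw [← hverts, hp.ncard_support]⟩

/-- Around a cycle, the colours `0, 3, 0, 3, …` meet demand `1` at every inner vertex. Adding `2`
from index `k` on keeps the colours at a vertex distinct, raises the demand at vertex `k` to `3`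
and, on an odd cycle, leaves demand `2` at the start vertex. -/
def shiftedAlternating (k j : ℕ) : ZMod 4 :=
  (if Even j then 0 else 3) + (if k ≤ j then 2 else 0)

lemma shiftedAlternating_succ (k j : ℕ) :
    shiftedAlternating k j ≠ shiftedAlternating k (j + 1) ∧
      shiftedAlternating k j + shiftedAlternating k (j + 1) + (if j + 1 = k then 3 else 1) = 0 := by
  unfold shiftedAlternating
  simp only [Nat.even_add_one]
  split_ifs <;> first | omega | decide

section Components

variable [Finite V] (hF : ∀ v, (F.neighborSet v).ncard = 2) {C : F.ConnectedComponent}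
  {d : V → ZMod 4}
include hF

lemma exists_isProperFlowAt_of_even (hC : Even C.supp.ncard) (hd : ∀ v ∈ C.supp, d v = 1) :
    ∃ x : Sym2 V → ZMod 4, ∀ v ∈ C.supp, IsProperFlowAt F x (d v) v := by
  obtain ⟨b, hb⟩ := C.nonempty_supp
  obtain ⟨p, hp, hsupp, hlen⟩ := C.exists_isCycle_support hF hb
  have hmem (v : V) : v ∈ p.support ↔ v ∈ C.supp := Set.ext_iff.mp hsupp v
  have hn := hp.three_le_length
  have hodd : ¬Even (p.length - 1) :=
    Nat.not_even_iff_odd.mpr (Nat.Even.sub_odd (by omega) (hlen ▸ hC) odd_one)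
  refine (hp.exists_isProperFlowAt hF d (shiftedAlternating p.length) ?_ ?_).imp
    fun x hx v hv => hx v ((hmem v).mpr hv)
  · simp only [shiftedAlternating, if_neg hodd, if_neg (show ¬p.length ≤ p.length - 1 by omega),
      if_neg (show ¬p.length ≤ 0 by omega), if_pos Even.zero, hd b hb]
    decide
  · intro i hi₀ hi
    obtain ⟨j, rfl⟩ : ∃ j, i = j + 1 := ⟨i - 1, by omega⟩
    simpa [hd _ ((hmem _).mp (p.getVert_mem_support _)), show j + 1 ≠ p.length by omega] using
      shiftedAlternating_succ p.length j

lemma exists_isProperFlowAt_of_odd (hC : Odd C.supp.ncard) {b w : V} (hb : b ∈ C.supp)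
    (hw : w ∈ C.supp) (hwb : w ≠ b) (hdb : d b = 2) (hdw : d w = 3)
    (hd : ∀ v ∈ C.supp, v ≠ b → v ≠ w → d v = 1) :
    ∃ x : Sym2 V → ZMod 4, ∀ v ∈ C.supp, IsProperFlowAt F x (d v) v := by
  obtain ⟨p, hp, hsupp, hlen⟩ := C.exists_isCycle_support hF hb
  have hmem (v : V) : v ∈ p.support ↔ v ∈ C.supp := Set.ext_iff.mp hsupp v
  have hn := hp.three_le_length
  obtain ⟨k, rfl, hk⟩ := Walk.mem_support_iff_exists_getVert.mp ((hmem w).mpr hw)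
  have hk' : 0 < k ∧ k < p.length := by
    have := (hp.getVert_endpoint_iff hk).not.mp hwb
    omega
  have heven : Even (p.length - 1) := Nat.Odd.sub_odd (hlen ▸ hC) odd_one
  refine (hp.exists_isProperFlowAt hF d (shiftedAlternating k) ?_ ?_).imp
    fun x hx v hv => hx v ((hmem v).mpr hv)
  · simp only [shiftedAlternating, if_pos heven, if_pos (show k ≤ p.length - 1 by omega),
      if_pos Even.zero, if_neg (show ¬k ≤ 0 by omega), hdb]
    decide
  · intro i hi₀ hi
    obtain ⟨j, rfl⟩ : ∃ j, i = j + 1 := ⟨i - 1, by omega⟩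
    have hdj : d (p.getVert (j + 1)) = if j + 1 = k then 3 else 1 := by
      split_ifs with hjk
      · rw [hjk, hdw]
      · refine hd _ ((hmem _).mp (p.getVert_mem_support _)) ?_ ?_
        · exact fun h => by have := (hp.getVert_endpoint_iff hi.le).mp h; omega
        · exact fun h => hjk (hp.getVert_injOn' (show j + 1 ≤ p.length - 1 by omega)
            (show k ≤ p.length - 1 by omega) h)
    simpa [hdj] using shiftedAlternating_succ k j

end Components

section TwoCycles

variable {τ : V → V} (hτ : Function.Involutive τ)
  (hτC : ∀ v, F.connectedComponentMk (τ v) ≠ F.connectedComponentMk v)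
  (hcard : Nat.card F.ConnectedComponent = 2)

include hτC in
lemma eq_of_partner_edge_eq {u v : V} (hc : F.connectedComponentMk u = F.connectedComponentMk v)
    (h : s(u, τ u) = s(v, τ v)) : u = v := by
  rcases Sym2.eq_iff.mp h with ⟨huv, -⟩ | ⟨rfl, -⟩
  exacts [huv, absurd hc (hτC v)]

include hτC hcard in
lemma eq_or_eq_partner (C : F.ConnectedComponent) (v : V) :
    C = F.connectedComponentMk v ∨ C = F.connectedComponentMk (τ v) := by
  obtain ⟨y, -, hy⟩ := (Nat.card_eq_two_iff' (F.connectedComponentMk v)).mp hcard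
  by_cases hC : C = F.connectedComponentMk v
  · exact Or.inl hC
  · exact Or.inr ((hy C hC).trans (hy _ (hτC v)).symm)

include hτ hτC hcard in
lemma exists_mem_supp_partner_edge_eq (C : F.ConnectedComponent) (v : V) :
    ∃ u ∈ C.supp, s(u, τ u) = s(v, τ v) := by
  rcases eq_or_eq_partner hτC hcard C v with rfl | rfl
  · exact ⟨v, rfl, rfl⟩
  · exact ⟨τ v, rfl, by rw [hτ v, Sym2.eq_swap]⟩

include hτC hcard in
lemma connectedComponentMk_partner_eq_iff (u v : V) :
    F.connectedComponentMk (τ u) = F.connectedComponentMk v ↔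
      F.connectedComponentMk u ≠ F.connectedComponentMk v := by
  refine ⟨fun h huv => hτC u (h.trans huv.symm), fun h => ?_⟩
  rcases eq_or_eq_partner hτC hcard (F.connectedComponentMk v) u with h' | h'
  exacts [absurd h'.symm h, h'.symm]

include hτ hτC hcard in
lemma ncard_supp_eq (C : F.ConnectedComponent) (v : V) :
    C.supp.ncard = (F.connectedComponentMk v).supp.ncard := by
  rcases eq_or_eq_partner hτC hcard C v with rfl | rfl
  · rfl
  have hsupp : (F.connectedComponentMk (τ v)).supp = τ '' (F.connectedComponentMk v).supp := by
    ext u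
    rw [hτ.image_eq_preimage_symm, Set.mem_preimage, ConnectedComponent.mem_supp_iff,
      ConnectedComponent.mem_supp_iff, connectedComponentMk_partner_eq_iff hτC hcard, eq_comm,
      connectedComponentMk_partner_eq_iff hτC hcard, ne_comm]
  rw [hsupp, Set.ncard_image_of_injective _ hτ.injective]

include hτ hτC hcard in
lemma exists_matching_color_and_flows [Finite V] (hF : ∀ v, (F.neighborSet v).ncard = 2) :
    ∃ m : Sym2 V → ZMod 4, (∀ v, m s(v, τ v) ≠ 0) ∧ ∀ C : F.ConnectedComponent,
      ∃ x : Sym2 V → ZMod 4, ∀ v ∈ C.supp, IsProperFlowAt F x (m s(v, τ v)) v := by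
  obtain ⟨C₀, -, -⟩ := Nat.card_eq_two_iff.mp hcard
  obtain ⟨b, -⟩ := C₀.nonempty_supp
  have hsize (C : F.ConnectedComponent) := ncard_supp_eq hτ hτC hcard C b
  rcases Nat.even_or_odd (F.connectedComponentMk b).supp.ncard with heven | hodd
  · exact ⟨fun _ => 1, fun _ => (by decide : (1 : ZMod 4) ≠ 0),
      fun C => exists_isProperFlowAt_of_even hF (hsize C ▸ heven) fun _ _ => rfl⟩
  obtain ⟨w, hw⟩ : (F.neighborSet b).Nonempty :=
    Set.nonempty_of_ncard_ne_zero (by rw [hF b]; omega)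
  have hwb : s(w, τ w) ≠ s(b, τ b) := fun h => hw.ne <|
    (eq_of_partner_edge_eq hτC (ConnectedComponent.connectedComponentMk_eq_of_adj hw.symm) h).symm
  classical
  refine ⟨fun e => if e = s(b, τ b) then 2 else if e = s(w, τ w) then 3 else 1,
    fun v => by dsimp only; split_ifs <;> decide, fun C => ?_⟩
  obtain ⟨b', hb', hb'b⟩ := exists_mem_supp_partner_edge_eq hτ hτC hcard C b
  obtain ⟨w', hw', hw'w⟩ := exists_mem_supp_partner_edge_eq hτ hτC hcard C w
  have hunique {u u' : V} (hu : u ∈ C.supp) (hu' : u' ∈ C.supp) (h : s(u, τ u) = s(u', τ u')) :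
      u = u' :=
    eq_of_partner_edge_eq hτC (hu.trans hu'.symm) h
  refine exists_isProperFlowAt_of_odd hF (hsize C ▸ hodd) hb' hw' ?_ ?_ ?_ ?_
  · rintro rfl
    exact hwb (hw'w.symm.trans hb'b)
  · simp [hb'b]
  · simp [hw'w, hwb]
  · intro v hv hvb hvw
    dsimp only
    rw [if_neg (fun h => hvb (hunique hv hb' (h.trans hb'b.symm))),
      if_neg (fun h => hvw (hunique hv hw' (h.trans hw'w.symm)))]

end TwoCycles

end

theorem statement9 {V : Type*} [Fintype V] (G : SimpleGraph V)
    (hG : IsPermutationSnark G) :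
    ∃ σ : Sym2 V → ZMod 4 × ZMod 2, IsProperAbelianColoring G σ := by
  obtain ⟨⟨-, -, hcubic, -⟩, F, hF, hcard, hchordless⟩ := hG
  choose τ hτG hτF using hF.exists_adj_not_adj hcubic
  have hτ := hF.involutive_of_adj_not_adj hcubic hτG hτF
  have hτC (v : V) : F.connectedComponentMk (τ v) ≠ F.connectedComponentMk v :=
    (hchordless v (τ v) (hτG v) (hτF v)).symm
  obtain ⟨m, hm, hflows⟩ := exists_matching_color_and_flows hτ hτC hcard hF.2
  obtain ⟨x, hx⟩ := exists_forall_isProperFlowAt hflows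
  exact ⟨_, hF.isProperAbelianColoring hcubic hτG hτF hm hx⟩
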